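/- arXiv:2511.03452 — 5 statements merged into one kernel-verified Lean document; each statement's English description precedes it below -/
import Mathlib

section
/- Under ρ > r > 0, γ > 0, y > 0, the function μ is a strictly increasing bijection from [0, ∞) onto [0, ∞); in particular μ(0) = 0 and μ(T) → ∞ as T → ∞. -/
/-!
Write `μ(T) = A e^{aT} + B e^{-rT} - y/r` with `A = γy/(r(γ-1)+ρ)`, `B = y/r - A` and
`a = (ρ-r)/γ > 0`. The coefficients are tuned so that `A a = B r` (both equal
`y(ρ-r)/(r(γ-1)+ρ) > 0`), hence `μ'(T) = A a (e^{aT} - e^{-rT})` is positive for `T > 0`.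
So `μ` is strictly increasing on `[0, ∞)`; it vanishes at `0` and is dominated by the growing
exponential at infinity, and the intermediate value theorem makes it onto `[0, ∞)`.
-/

open Real Set Filter

theorem StrictMonoOn.bijOn_Ici_of_tendsto_atTop {α δ : Type*} [ConditionallyCompleteLinearOrder α]
    [TopologicalSpace α] [OrderTopology α] [DenselyOrdered α] [LinearOrder δ] [TopologicalSpace δ]
    [OrderClosedTopology δ] {f : α → δ} {a : α} (hmono : StrictMonoOn f (Ici a))
    (hcont : ContinuousOn f (Ici a)) (htop : Tendsto f atTop atTop) :
    BijOn f (Ici a) (Ici (f a)) :=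
  ⟨hmono.monotoneOn.mapsTo_Ici, hmono.injOn, intermediate_value_Ici hcont htop⟩

section ExpCombination

variable {A B C a b : ℝ}

theorem hasDerivAt_exp_combination (T : ℝ) :
    HasDerivAt (fun T => A * exp (a * T) + B * exp (-b * T) + C)
      (A * a * exp (a * T) - B * b * exp (-b * T)) T := by
  have hA := (((hasDerivAt_id T).const_mul a).exp).const_mul A
  have hB := (((hasDerivAt_id T).const_mul (-b)).exp).const_mul B
  refine ((hA.add hB).add_const C).congr_deriv ?_
  simp only [id, mul_one]
  ring

theorem strictMonoOn_exp_combination (hab : 0 < a + b) (hk : 0 < A * a) (hAB : A * a = B * b) :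
    StrictMonoOn (fun T => A * exp (a * T) + B * exp (-b * T) + C) (Ici 0) := by
  refine strictMonoOn_of_hasDerivWithinAt_pos (convex_Ici 0) (by fun_prop)
    (fun T _ => (hasDerivAt_exp_combination T).hasDerivWithinAt) fun T hT => ?_
  rw [interior_Ici, mem_Ioi] at hT
  have hexp : exp (-b * T) < exp (a * T) := exp_lt_exp.2 (by nlinarith)
  rw [← hAB, ← mul_sub]
  exact mul_pos hk (sub_pos.2 hexp)

theorem tendsto_exp_combination_atTop (hA : 0 < A) (ha : 0 < a) (hb : 0 < b) :
    Tendsto (fun T => A * exp (a * T) + B * exp (-b * T) + C) atTop atTop := by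
  have hgrow : Tendsto (fun T => A * exp (a * T)) atTop atTop :=
    (tendsto_exp_atTop.comp (tendsto_id.const_mul_atTop ha)).const_mul_atTop hA
  have hdecay : Tendsto (fun T => B * exp (-b * T)) atTop (nhds (B * 0)) :=
    (tendsto_exp_atBot.comp (tendsto_id.const_mul_atTop_of_neg (neg_neg_of_pos hb))).const_mul B
  exact tendsto_atTop_add_const_right _ C (hgrow.atTop_add hdecay)

end ExpCombination

theorem stmt_4 (r ρ γ y : ℝ) (hr : 0 < r) (hγ : 0 < γ) (hy : 0 < y) (hρr : r < ρ) :
    StrictMonoOn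
      (fun T : ℝ =>
        (γ * y / (r * (γ - 1) + ρ)) * Real.exp (((ρ - r) / γ) * T) - y / r +
          Real.exp (-r * T) * (y / r - γ * y / (r * (γ - 1) + ρ)))
      (Set.Ici 0) ∧
    Set.BijOn
      (fun T : ℝ =>
        (γ * y / (r * (γ - 1) + ρ)) * Real.exp (((ρ - r) / γ) * T) - y / r +
          Real.exp (-r * T) * (y / r - γ * y / (r * (γ - 1) + ρ)))
      (Set.Ici 0) (Set.Ici 0) ∧
    (γ * y / (r * (γ - 1) + ρ)) * Real.exp (((ρ - r) / γ) * 0) - y / r +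
        Real.exp (-r * 0) * (y / r - γ * y / (r * (γ - 1) + ρ)) = 0 ∧
    Filter.Tendsto
      (fun T : ℝ =>
        (γ * y / (r * (γ - 1) + ρ)) * Real.exp (((ρ - r) / γ) * T) - y / r +
          Real.exp (-r * T) * (y / r - γ * y / (r * (γ - 1) + ρ)))
      Filter.atTop Filter.atTop := by
  have hD : 0 < r * (γ - 1) + ρ := by nlinarith
  set A := γ * y / (r * (γ - 1) + ρ) with hA_def
  set a := (ρ - r) / γ with ha_def
  have hA : 0 < A := by positivity
  have ha : 0 < a := div_pos (sub_pos.2 hρr) hγ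
  have hcoeff : A * a = (y / r - A) * r := by
    rw [hA_def, ha_def]; field_simp; ring
  have hμ : (fun T => A * exp (a * T) - y / r + exp (-r * T) * (y / r - A)) =
      fun T => A * exp (a * T) + (y / r - A) * exp (-r * T) + -(y / r) := by
    funext T; ring
  have hμ0 : A * exp (a * 0) - y / r + exp (-r * 0) * (y / r - A) = 0 := by simp
  have hmono := strictMonoOn_exp_combination (C := -(y / r)) (by linarith) (mul_pos hA ha) hcoeff
  have htop := tendsto_exp_combination_atTop (B := y / r - A) (C := -(y / r)) hA ha hr
  rw [hμ]
  refine ⟨hmono, ?_, hμ0, htop⟩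
  simpa [hμ0] using hmono.bijOn_Ici_of_tendsto_atTop (by fun_prop) htop
end

section
/- Define h(a) = -(a + γy/ρ)/y - (γ/ρ)·W₋₁(f(a)) where f(a) = -exp(-(ρ/(γy))·(a + γy/ρ)). Then for every a > 0, h(a) > 0 and μ₀(h(a)) = a, where μ₀(T) = (γy/ρ)·e^{(ρ/γ)T} - y·T - γy/ρ. -/
/-!
Put `c = γy/ρ`, `t = (a + c)/c > 1` and `w = W₋₁(-e^{-t})`. Then `h = (γ/ρ)(-w - t)` and the
defining equation `w e^w = -e^{-t}` says exactly `e^{-w-t} = -w`, so `μ₀(h) = c(-w) - c(-w - t) - c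
= ct - c = a`. Positivity of `h` means `-w > t`: on the lower branch `-w ≥ 1`, and `-w ≤ t` would
force `-w = e^{-w-t} ≤ 1`, hence `-w = 1` and `t = 1`.
-/

open Real Set

lemma exp_neg_sub_eq_of_mul_exp_eq {w t : ℝ} (hw : w * exp w = -exp (-t)) :
    exp (-w - t) = -w := by
  have het : exp (-t) = -(w * exp w) := by linarith
  rw [sub_eq_add_neg, exp_add, het, exp_neg]
  field_simp

lemma lt_neg_of_mul_exp_eq {w t : ℝ} (ht : 1 < t) (hw1 : w ≤ -1)
    (hw : w * exp w = -exp (-t)) : t < -w := by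
  have hfix := exp_neg_sub_eq_of_mul_exp_eq hw
  by_contra! hle
  have hw_eq : w = -1 := by
    have : exp (-w - t) ≤ 1 := exp_le_one_iff.mpr (by linarith)
    linarith
  rw [hw_eq, neg_neg, exp_eq_one_iff] at hfix
  linarith

lemma neg_exp_neg_mem_Ico {t : ℝ} (ht : 1 ≤ t) : -exp (-t) ∈ Ico (-(exp 1)⁻¹) 0 := by
  refine ⟨?_, neg_lt_zero.mpr (exp_pos _)⟩
  rw [neg_le_neg_iff, ← exp_neg]
  exact exp_le_exp.mpr (by linarith)

theorem stmt_9 (ρ γ y : ℝ) (hρ : 0 < ρ) (hγ : 0 < γ) (hy : 0 < y)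
    (W : ℝ → ℝ)
    (hWid : ∀ x ∈ Set.Ico (-(Real.exp 1)⁻¹) 0, W x * Real.exp (W x) = x)
    (hWle : ∀ x ∈ Set.Ico (-(Real.exp 1)⁻¹) 0, W x ≤ -1) :
    ∀ a : ℝ, 0 < a →
      let h := -(a + γ * y / ρ) / y - (γ / ρ) * W (-Real.exp (-(ρ / (γ * y)) * (a + γ * y / ρ)))
      0 < h ∧ (γ * y / ρ) * Real.exp ((ρ / γ) * h) - y * h - γ * y / ρ = a := by
  intro a ha h
  set t := ρ / (γ * y) * (a + γ * y / ρ) with ht_def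
  have ht : 1 < t := by
    have : t = ρ / (γ * y) * a + 1 := by rw [ht_def]; field_simp
    rw [this]
    linarith [show 0 < ρ / (γ * y) * a by positivity]
  have hx := neg_exp_neg_mem_Ico ht.le
  set w := W (-exp (-t))
  have hh : h = γ / ρ * (-w - t) := by
    simp only [h, w, ht_def, neg_mul]
    field_simp
    ring
  have hwt := lt_neg_of_mul_exp_eq ht (hWle _ hx) (hWid _ hx)
  refine ⟨hh ▸ mul_pos (div_pos hγ hρ) (by linarith), ?_⟩
  rw [show ρ / γ * h = -w - t by rw [hh]; field_simp, exp_neg_sub_eq_of_mul_exp_eq (hWid _ hx), hh]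
  have hct : γ * y / ρ * t = a + γ * y / ρ := by rw [ht_def]; field_simp
  linear_combination hct
end

section
/- The partial derivative with respect to y of the consumption function c*(a; y) = -y·W₋₁(f(a; y)), where f(a; y) = -exp(-(ρ/(γy))·(a + γy/ρ)), equals -w·(1 + (ρa/(γy))·1/(1+w)) with w = W₋₁(f(a; y)), and this quantity is strictly positive. -/
/-!
With `s = ρa/(γy)` the argument of `W` is `-exp (-s - 1)`, which lies in `(-1/e, 0)` since `s > 0`.
Differentiating `-y · W(-exp u(y))` with `u(y) = -ρa/(γy) - 1`, the factor `x` in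
`W'(x) = W(x) / (x (1 + W(x)))` cancels against the derivative of `-exp u`, and `y u'(y) = s`,
which gives `-w (1 + s/(1 + w))`. For the sign, taking logarithms in `w eʷ = -e^{-s-1}` gives
`1 + w + s = -log(-w) < 0` because `w < -1`, so `1 + s/(1 + w)` is a quotient of two negative numbers.
-/

open Real Set

lemma neg_exp_neg_sub_one_mem_Ioo {s : ℝ} (hs : 0 < s) :
    -exp (-s - 1) ∈ Ioo (-(exp 1)⁻¹) 0 := by
  refine ⟨?_, neg_lt_zero.2 (exp_pos _)⟩
  rw [neg_lt_neg_iff, ← exp_neg]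
  exact exp_lt_exp.2 (by linarith)

lemma one_add_add_eq_neg_log_of_mul_exp_eq {w s : ℝ} (hw : w < 0)
    (h : w * exp w = -exp (-s - 1)) : 1 + w + s = -log (-w) := by
  have h' : -w * exp w = exp (-s - 1) := by linarith
  have := congrArg log h'
  rw [log_mul (by linarith) (exp_ne_zero _), log_exp, log_exp] at this
  linarith

lemma neg_mul_one_add_div_pos_of_mul_exp_eq {w s : ℝ} (hw : w < -1)
    (h : w * exp w = -exp (-s - 1)) : 0 < -w * (1 + s * (1 / (1 + w))) := by
  have hlog : 1 + w + s = -log (-w) :=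
    one_add_add_eq_neg_log_of_mul_exp_eq (by linarith) h
  have hsum : 1 + w + s < 0 := by
    rw [hlog, neg_lt_zero]
    exact log_pos (by linarith)
  have hfactor : 1 + s * (1 / (1 + w)) = (1 + w + s) / (1 + w) := by
    field_simp [(by linarith : 1 + w ≠ 0)]
  rw [hfactor]
  exact mul_pos (by linarith) (div_pos_of_neg_of_neg hsum (by linarith))

lemma hasDerivAt_neg_mul_comp_neg_exp {W u : ℝ → ℝ} {u' y : ℝ}
    (hW : HasDerivAt W (W (-exp (u y)) / (-exp (u y) * (1 + W (-exp (u y))))) (-exp (u y)))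
    (hu : HasDerivAt u u' y) :
    HasDerivAt (fun t => -t * W (-exp (u t)))
      (-W (-exp (u y)) * (1 + y * u' * (1 / (1 + W (-exp (u y)))))) y := by
  have hcomp : HasDerivAt (fun t => W (-exp (u t)))
      (W (-exp (u y)) / (-exp (u y) * (1 + W (-exp (u y)))) * (-(exp (u y) * u'))) y :=
    hW.comp y hu.exp.neg
  refine ((hasDerivAt_id' y).fun_neg.fun_mul hcomp).congr_deriv ?_
  field_simp
  ring

lemma hasDerivAt_neg_div_mul_add_div {ρ γ a y : ℝ} (hρ : ρ ≠ 0) (hγ : γ ≠ 0) (hy : y ≠ 0) :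
    HasDerivAt (fun t => -(ρ / (γ * t)) * (a + γ * t / ρ)) (ρ * a / (γ * y ^ 2)) y := by
  have hinv : HasDerivAt (fun t => -(ρ * a / γ) * t⁻¹ - 1) (-(ρ * a / γ) * -(y ^ 2)⁻¹) y :=
    ((hasDerivAt_inv hy).const_mul _).sub_const 1
  refine (hinv.congr_deriv (by field_simp)).congr_of_eventuallyEq ?_
  filter_upwards [eventually_ne_nhds hy] with t ht
  field_simp
  ring

theorem stmt_14 (ρ γ a y : ℝ) (hρ : 0 < ρ) (hγ : 0 < γ) (ha : 0 < a) (hy : 0 < y)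
    (W : ℝ → ℝ)
    (hW' : ∀ x ∈ Set.Ioo (-(Real.exp 1)⁻¹) 0,
      HasDerivAt W (W x / (x * (1 + W x))) x)
    (hWlt : ∀ x ∈ Set.Ioo (-(Real.exp 1)⁻¹) 0, W x < -1)
    (hWid : ∀ x ∈ Set.Ioo (-(Real.exp 1)⁻¹) 0, W x * Real.exp (W x) = x) :
    let w := W (-Real.exp (-(ρ / (γ * y)) * (a + γ * y / ρ)))
    HasDerivAt
      (fun y : ℝ => -y * W (-Real.exp (-(ρ / (γ * y)) * (a + γ * y / ρ))))
      (-w * (1 + (ρ * a / (γ * y)) * (1 / (1 + w))))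
      y ∧
    0 < -w * (1 + (ρ * a / (γ * y)) * (1 / (1 + w))) := by
  intro w
  have hexponent : -(ρ / (γ * y)) * (a + γ * y / ρ) = -(ρ * a / (γ * y)) - 1 := by
    field_simp
    ring
  have hx : -exp (-(ρ / (γ * y)) * (a + γ * y / ρ)) ∈ Ioo (-(exp 1)⁻¹) 0 := by
    rw [hexponent]
    exact neg_exp_neg_sub_one_mem_Ioo (by positivity)
  refine ⟨?_, neg_mul_one_add_div_pos_of_mul_exp_eq (hWlt _ hx) ?_⟩
  · have hy_mul : y * (ρ * a / (γ * y ^ 2)) = ρ * a / (γ * y) := by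
      field_simp
    simpa only [hy_mul] using hasDerivAt_neg_mul_comp_neg_exp
      (u := fun t => -(ρ / (γ * t)) * (a + γ * t / ρ)) (hW' _ hx)
      (hasDerivAt_neg_div_mul_add_div hρ.ne' hγ.ne' hy.ne')
  · rw [hWid _ hx, hexponent]
end

section
/- The second partial derivative of c*(a; y) = -y·W₋₁(f(a; y)) with respect to a equals -(ρ²/(γ²y))·w/(1+w)³ with w = W₋₁(f(a; y)), and this is strictly negative; hence the consumption function is strictly concave in assets. -/
/-! Along `a ↦ -exp (-k (a + b))` the Lambert equation `W' = W / (x (1 + W))` turns into the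
autonomous equation `w' = -k w / (1 + w)` for `w a = W (-exp (-k (a + b)))`. Differentiating
once more, with `(w / (1 + w))' = w' / (1 + w)²`, gives `w'' = k² w / (1 + w)³`, which is
positive on the lower branch `w < -1`; so `-y w` has negative second derivative and is strictly
concave. -/

open Real Set

lemma neg_exp_neg_mul_mem_Ioo {k t : ℝ} (h : 1 < k * t) :
    -exp (-k * t) ∈ Ioo (-(exp 1)⁻¹) 0 :=
  ⟨by rw [neg_lt_neg_iff, ← exp_neg]; exact exp_lt_exp.2 (by linarith),
    neg_neg_of_pos (exp_pos _)⟩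

lemma div_one_add_pow_three_pos {w : ℝ} (hw : w < -1) : 0 < w / (1 + w) ^ 3 :=
  div_pos_of_neg_of_neg (by linarith) (Odd.pow_neg (by decide) (by linarith))

lemma HasDerivAt.comp_of_hasDerivAt_div_mul_one_add {W g : ℝ → ℝ} {k x : ℝ}
    (hW : HasDerivAt W (W (g x) / (g x * (1 + W (g x)))) (g x))
    (hg : HasDerivAt g (k * g x) x) (hgx : g x ≠ 0) :
    HasDerivAt (fun t => W (g t)) (k * (W (g x) / (1 + W (g x)))) x := by
  refine (hW.comp x hg).congr_deriv ?_
  field_simp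

lemma HasDerivAt.div_one_add_self {h : ℝ → ℝ} {h' x : ℝ} (hh : HasDerivAt h h' x)
    (hx : 1 + h x ≠ 0) :
    HasDerivAt (fun t => h t / (1 + h t)) (h' / (1 + h x) ^ 2) x := by
  refine (hh.div (hh.const_add 1) hx).congr_deriv ?_
  ring

section LambertExp

variable {W : ℝ → ℝ} {k b : ℝ}
  (hW' : ∀ x ∈ Ioo (-(exp 1)⁻¹) 0, HasDerivAt W (W x / (x * (1 + W x))) x)
  (hWlt : ∀ x ∈ Ioo (-(exp 1)⁻¹) 0, W x < -1)
include hW'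

lemma hasDerivAt_lambert_neg_exp {a : ℝ} (ha : 1 < k * (a + b)) :
    HasDerivAt (fun a => W (-exp (-k * (a + b))))
      (-k * (W (-exp (-k * (a + b))) / (1 + W (-exp (-k * (a + b)))))) a := by
  have hmem := neg_exp_neg_mul_mem_Ioo ha
  have hg : HasDerivAt (fun a => -exp (-k * (a + b))) (-k * -exp (-k * (a + b))) a := by
    refine (((hasDerivAt_id a).add_const b).const_mul (-k)).exp.neg.congr_deriv ?_
    simp only [id]; ring
  exact (hW' _ hmem).comp_of_hasDerivAt_div_mul_one_add (g := fun a => -exp (-k * (a + b))) hg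
    hmem.2.ne

include hWlt

lemma deriv_deriv_lambert_neg_exp {a : ℝ} (ha : 1 < k * (a + b)) :
    deriv (deriv fun a => W (-exp (-k * (a + b)))) a =
      k ^ 2 * (W (-exp (-k * (a + b))) / (1 + W (-exp (-k * (a + b)))) ^ 3) := by
  have hopen : IsOpen {a : ℝ | 1 < k * (a + b)} := isOpen_lt continuous_const (by fun_prop)
  have hderiv : deriv (fun a => W (-exp (-k * (a + b)))) =ᶠ[nhds a]
      fun a => -k * (W (-exp (-k * (a + b))) / (1 + W (-exp (-k * (a + b))))) := by
    filter_upwards [hopen.mem_nhds ha] with c hc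
    exact (hasDerivAt_lambert_neg_exp hW' hc).deriv
  have hw := hWlt _ (neg_exp_neg_mul_mem_Ioo ha)
  have hw1 : 1 + W (-exp (-k * (a + b))) ≠ 0 := by linarith
  rw [hderiv.deriv_eq,
    (((hasDerivAt_lambert_neg_exp hW' ha).div_one_add_self hw1).const_mul (-k)).deriv]
  field_simp

lemma deriv_deriv_neg_mul_lambert_neg_exp (y : ℝ) {a : ℝ} (ha : 1 < k * (a + b)) :
    deriv (deriv fun a => -y * W (-exp (-k * (a + b)))) a =
      -(y * k ^ 2) * (W (-exp (-k * (a + b))) / (1 + W (-exp (-k * (a + b)))) ^ 3) := by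
  simp only [deriv_const_mul_field']
  rw [deriv_deriv_lambert_neg_exp hW' hWlt ha]
  ring

theorem strictConcaveOn_neg_mul_lambert_neg_exp {y : ℝ} (hy : 0 < y) {D : Set ℝ}
    (hD : Convex ℝ D) (hDk : ∀ a ∈ D, 1 < k * (a + b)) :
    StrictConcaveOn ℝ D fun a => -y * W (-exp (-k * (a + b))) := by
  refine strictConcaveOn_of_deriv2_neg' hD
    (fun a ha => ((hasDerivAt_lambert_neg_exp hW' (hDk a ha)).continuousAt.const_mul
      _).continuousWithinAt) fun a ha => ?_
  have hk : k ≠ 0 := by rintro rfl; linarith [hDk a ha]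
  have hw := hWlt _ (neg_exp_neg_mul_mem_Ioo (hDk a ha))
  simp only [Function.iterate_succ, Function.iterate_zero, Function.id_comp, Function.comp_apply]
  rw [deriv_deriv_neg_mul_lambert_neg_exp hW' hWlt y (hDk a ha)]
  exact mul_neg_of_neg_of_pos (neg_neg_of_pos (by positivity)) (div_one_add_pow_three_pos hw)

end LambertExp

theorem stmt_15 (ρ γ y : ℝ) (hρ : 0 < ρ) (hγ : 0 < γ) (hy : 0 < y)
    (W : ℝ → ℝ)
    (hW' : ∀ x ∈ Set.Ioo (-(Real.exp 1)⁻¹) 0,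
      HasDerivAt W (W x / (x * (1 + W x))) x)
    (hWlt : ∀ x ∈ Set.Ioo (-(Real.exp 1)⁻¹) 0, W x < -1) :
    ∀ a : ℝ, 0 < a →
      let w := W (-Real.exp (-(ρ / (γ * y)) * (a + γ * y / ρ)))
      deriv (deriv (fun a : ℝ => -y * W (-Real.exp (-(ρ / (γ * y)) * (a + γ * y / ρ))))) a
          = -(ρ ^ 2 / (γ ^ 2 * y)) * (w / (1 + w) ^ 3) ∧
      -(ρ ^ 2 / (γ ^ 2 * y)) * (w / (1 + w) ^ 3) < 0 ∧
      StrictConcaveOn ℝ (Set.Ioi 0)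
        (fun a : ℝ => -y * W (-Real.exp (-(ρ / (γ * y)) * (a + γ * y / ρ)))) := by
  have hpos : ∀ a > 0, 1 < ρ / (γ * y) * (a + γ * y / ρ) := fun a ha => by
    have hkb : ρ / (γ * y) * (γ * y / ρ) = 1 := by field_simp
    rw [mul_add, hkb]
    linarith [mul_pos (show 0 < ρ / (γ * y) by positivity) ha]
  intro a ha w
  have hw := div_one_add_pow_three_pos (hWlt _ (neg_exp_neg_mul_mem_Ioo (hpos a ha)))
  refine ⟨?_, ?_, strictConcaveOn_neg_mul_lambert_neg_exp hW' hWlt hy (convex_Ioi 0) hpos⟩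
  · rw [deriv_deriv_neg_mul_lambert_neg_exp hW' hWlt y (hpos a ha)]
    congr 2
    field_simp
  · exact mul_neg_of_neg_of_pos (neg_neg_of_pos (by positivity)) hw
end

section
/- Any consumption path c : [0,∞) → [0,∞) that is feasible (i.e., satisfies ∫₀^t e^{-rτ} c(τ) dτ ≤ a - (y/r)(e^{-rt} - 1) for all t ≥ 0) satisfies the intertemporal budget bound ∫₀^∞ e^{-ρt} c(t) dt ≤ a + y/ρ, assuming ρ > r > 0, a > 0, y ≥ 0. -/
open Real Set MeasureTheory intervalIntegral
open scoped ENNReal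

/-! Write `e^{-ρt} = e^{-rt} e^{-(ρ-r)t}` and `e^{-(ρ-r)t} = ∫_t^∞ (ρ-r) e^{-(ρ-r)s} ds`.
By Tonelli, the `ρ`-discounted consumption becomes `∫_0^∞ (ρ-r) e^{-(ρ-r)s} C(s) ds`, where
`C(s) = ∫_0^s e^{-rτ} c(τ) dτ` is the `r`-discounted consumption up to time `s`. Feasibility bounds
`C(s)` by `a + y/r - (y/r) e^{-rs}`, and integrating this bound against the density
`(ρ-r) e^{-(ρ-r)s}` gives exactly `a + y/ρ`. -/

theorem lintegral_Ioi_lintegral_Ioi_mul_eq {μ : Measure ℝ} [SFinite μ] {f g : ℝ → ℝ≥0∞}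
    (hf : Measurable f) (hg : Measurable g) (x₀ : ℝ) :
    ∫⁻ t in Ioi x₀, (∫⁻ s in Ioi t, g s ∂μ) * f t ∂μ =
      ∫⁻ s in Ioi x₀, g s * ∫⁻ t in Ioo x₀ s, f t ∂μ ∂μ := by
  set H : ℝ → ℝ → ℝ≥0∞ := fun t s =>
    {p : ℝ × ℝ | p.1 < p.2}.indicator (fun p => g p.2 * f p.1) (t, s)
  have hH : Measurable (Function.uncurry H) :=
    ((hg.comp measurable_snd).mul (hf.comp measurable_fst)).indicator
      (measurableSet_lt measurable_fst measurable_snd)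
  calc ∫⁻ t in Ioi x₀, (∫⁻ s in Ioi t, g s ∂μ) * f t ∂μ
      = ∫⁻ t in Ioi x₀, ∫⁻ s in Ioi x₀, H t s ∂μ ∂μ := by
        refine setLIntegral_congr_fun measurableSet_Ioi fun t ht => ?_
        have hH_t : H t = (Ioi t).indicator (fun s => g s * f t) := by
          ext s; simp [H, indicator_apply]
        rw [hH_t, lintegral_indicator measurableSet_Ioi,
          Measure.restrict_restrict_of_subset (Ioi_subset_Ioi (le_of_lt ht)),
          lintegral_mul_const _ hg]
    _ = ∫⁻ s in Ioi x₀, ∫⁻ t in Ioi x₀, H t s ∂μ ∂μ := lintegral_lintegral_swap hH.aemeasurable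
    _ = ∫⁻ s in Ioi x₀, g s * ∫⁻ t in Ioo x₀ s, f t ∂μ ∂μ := by
        refine lintegral_congr fun s => ?_
        have hH_s : (fun t => H t s) = (Iio s).indicator (fun t => g s * f t) := by
          ext t; simp [H, indicator_apply]
        rw [hH_s, lintegral_indicator measurableSet_Iio,
          Measure.restrict_restrict measurableSet_Iio, Iio_inter_Ioi, lintegral_const_mul _ hf]

theorem lintegral_Ioi_ofReal_mul_exp_neg_mul {b : ℝ} (hb : 0 < b) (t : ℝ) :
    ∫⁻ s in Ioi t, ENNReal.ofReal (b * exp (-b * s)) = ENNReal.ofReal (exp (-b * t)) := by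
  rw [← ofReal_integral_eq_lintegral_ofReal ((exp_neg_integrableOn_Ioi t hb).const_mul b)
      (ae_of_all _ fun s => by positivity), MeasureTheory.integral_const_mul,
    integral_exp_mul_Ioi (neg_neg_of_pos hb)]
  congr 1
  field_simp

theorem lintegral_exp_neg_mul_eq_lintegral_primitive {b : ℝ} (hb : 0 < b) {f : ℝ → ℝ≥0∞}
    (hf : Measurable f) (x₀ : ℝ) :
    ∫⁻ t in Ioi x₀, ENNReal.ofReal (exp (-b * t)) * f t =
      ∫⁻ s in Ioi x₀, ENNReal.ofReal (b * exp (-b * s)) * ∫⁻ t in Ioo x₀ s, f t := by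
  simp_rw [← lintegral_Ioi_ofReal_mul_exp_neg_mul hb]
  exact lintegral_Ioi_lintegral_Ioi_mul_eq hf (by fun_prop) x₀

theorem lintegral_Ioi_ofReal_mul_exp_neg_mul_sub {b r A B : ℝ} (hb : 0 < b) (hr : 0 < r)
    (hB : 0 ≤ B) (hBA : B ≤ A) :
    ∫⁻ s in Ioi 0, ENNReal.ofReal (b * exp (-b * s)) * ENNReal.ofReal (A - B * exp (-r * s)) =
      ENNReal.ofReal (A - B * b / (b + r)) := by
  have hsplit : ∀ s, b * exp (-b * s) * (A - B * exp (-r * s)) =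
      A * (b * exp (-b * s)) - B * b * exp (-(b + r) * s) := fun s => by
    rw [neg_add, add_mul, exp_add]; ring
  have hint₁ : IntegrableOn (fun s => A * (b * exp (-b * s))) (Ioi 0) :=
    ((exp_neg_integrableOn_Ioi 0 hb).const_mul b).const_mul A
  have hint₂ : IntegrableOn (fun s => B * b * exp (-(b + r) * s)) (Ioi 0) :=
    (exp_neg_integrableOn_Ioi 0 (add_pos hb hr)).const_mul (B * b)
  have hint : IntegrableOn (fun s => b * exp (-b * s) * (A - B * exp (-r * s))) (Ioi 0) :=
    (hint₁.sub hint₂).congr_fun (fun s _ => (hsplit s).symm) measurableSet_Ioi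
  have hnn : ∀ s ∈ Ioi (0:ℝ), 0 ≤ b * exp (-b * s) * (A - B * exp (-r * s)) := fun s hs => by
    have : exp (-r * s) ≤ 1 := exp_le_one_iff.2 (by nlinarith [mem_Ioi.1 hs])
    have : 0 ≤ A - B * exp (-r * s) := by nlinarith
    positivity
  have hval : ∫ s in Ioi 0, b * exp (-b * s) * (A - B * exp (-r * s)) = A - B * b / (b + r) := by
    simp_rw [hsplit]
    rw [integral_sub hint₁ hint₂, MeasureTheory.integral_const_mul,
      MeasureTheory.integral_const_mul, MeasureTheory.integral_const_mul,
      integral_exp_mul_Ioi (neg_neg_of_pos hb), integral_exp_mul_Ioi (by linarith)]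
    simp only [mul_zero, exp_zero]
    field_simp
  simp_rw [← ENNReal.ofReal_mul (by positivity : 0 ≤ b * exp (-b * _))]
  rw [← ofReal_integral_eq_lintegral_ofReal hint (ae_restrict_of_forall_mem measurableSet_Ioi hnn),
    hval]

theorem lintegral_Ioo_ofReal_eq_intervalIntegral {f : ℝ → ℝ} {a b : ℝ} (hab : a ≤ b)
    (hfi : IntegrableOn f (Ioc a b)) (hf : ∀ t ∈ Ioo a b, 0 ≤ f t) :
    ∫⁻ t in Ioo a b, ENNReal.ofReal (f t) = ENNReal.ofReal (∫ t in a..b, f t) := by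
  rw [integral_of_le hab, integral_Ioc_eq_integral_Ioo,
    ofReal_integral_eq_lintegral_ofReal (hfi.mono_set Ioo_subset_Ioc_self)
      (ae_restrict_of_forall_mem measurableSet_Ioo hf)]

theorem setIntegral_Ioi_exp_neg_mul_le {b r A B : ℝ} (hb : 0 < b) (hr : 0 < r) (hB : 0 ≤ B)
    (hBA : B ≤ A) {f : ℝ → ℝ} (hfm : Measurable f) (hf : ∀ t ∈ Ioi (0:ℝ), 0 ≤ f t)
    (hfi : LocallyIntegrableOn f (Ici 0))
    (hF : ∀ s ∈ Ioi (0:ℝ), ∫ t in (0:ℝ)..s, f t ≤ A - B * exp (-r * s)) :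
    ∫ t in Ioi 0, exp (-b * t) * f t ≤ A - B * b / (b + r) := by
  have hprimitive : ∀ s ∈ Ioi (0:ℝ),
      ∫⁻ t in Ioo 0 s, ENNReal.ofReal (f t) ≤ ENNReal.ofReal (A - B * exp (-r * s)) :=
    fun s hs => by
      rw [lintegral_Ioo_ofReal_eq_intervalIntegral (le_of_lt hs)
        ((hfi.integrableOn_compact_subset Icc_subset_Ici_self isCompact_Icc).mono_set
          Ioc_subset_Icc_self) fun t ht => hf t ht.1]
      exact ENNReal.ofReal_le_ofReal (hF s hs)
  have key : ∫⁻ t in Ioi 0, ENNReal.ofReal (exp (-b * t) * f t) ≤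
      ENNReal.ofReal (A - B * b / (b + r)) :=
    calc ∫⁻ t in Ioi 0, ENNReal.ofReal (exp (-b * t) * f t)
        = ∫⁻ t in Ioi 0, ENNReal.ofReal (exp (-b * t)) * ENNReal.ofReal (f t) := by
          simp_rw [ENNReal.ofReal_mul (exp_pos _).le]
      _ = ∫⁻ s in Ioi 0, ENNReal.ofReal (b * exp (-b * s)) *
            ∫⁻ t in Ioo 0 s, ENNReal.ofReal (f t) :=
          lintegral_exp_neg_mul_eq_lintegral_primitive hb hfm.ennreal_ofReal 0
      _ ≤ ∫⁻ s in Ioi 0, ENNReal.ofReal (b * exp (-b * s)) *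
            ENNReal.ofReal (A - B * exp (-r * s)) :=
          setLIntegral_mono' measurableSet_Ioi fun s hs => by gcongr; exact hprimitive s hs
      _ = ENNReal.ofReal (A - B * b / (b + r)) :=
          lintegral_Ioi_ofReal_mul_exp_neg_mul_sub hb hr hB hBA
  have hnn : 0 ≤ᵐ[volume.restrict (Ioi 0)] fun t => exp (-b * t) * f t :=
    ae_restrict_of_forall_mem measurableSet_Ioi fun t ht => mul_nonneg (exp_pos _).le (hf t ht)
  have hbound : 0 ≤ A - B * b / (b + r) := by
    have : B * b / (b + r) ≤ B := div_le_of_le_mul₀ (by positivity) hB (by nlinarith)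
    linarith
  rw [integral_eq_lintegral_of_nonneg_ae hnn (by fun_prop)]
  exact ENNReal.toReal_le_of_le_ofReal hbound key

theorem stmt_18 (ρ r a y : ℝ) (hr : 0 < r) (hρr : r < ρ) (ha : 0 < a) (hy : 0 ≤ y)
    (c : ℝ → ℝ) (hmeas : Measurable c) (hnonneg : ∀ t, 0 ≤ t → 0 ≤ c t)
    (hloc : MeasureTheory.LocallyIntegrableOn c (Set.Ici 0))
    (hfeas : ∀ t : ℝ, 0 ≤ t →
      (∫ τ in (0:ℝ)..t, Real.exp (-r * τ) * c τ) ≤ a - (y / r) * (Real.exp (-r * t) - 1)) :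
    (∫ t in Set.Ioi (0:ℝ), Real.exp (-ρ * t) * c t) ≤ a + y / ρ := by
  have hbound := setIntegral_Ioi_exp_neg_mul_le (sub_pos.2 hρr) hr (div_nonneg hy hr.le)
    (le_add_of_nonneg_left ha.le) (f := fun t => exp (-r * t) * c t) (by fun_prop)
    (fun t ht => mul_nonneg (exp_pos _).le (hnonneg t (le_of_lt ht)))
    (hloc.continuousOn_mul (by fun_prop) isClosed_Ici.isLocallyClosed)
    (fun s hs => (hfeas s (le_of_lt hs)).trans_eq (by ring))
  have hρ : ρ ≠ 0 := (hr.trans hρr).ne'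
  convert hbound using 1
  · congr with t
    rw [← mul_assoc, ← exp_add]
    ring_nf
  · rw [sub_add_cancel]
    field_simp
    ring
end
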